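/- arXiv:1508.00208 — 5 statements merged into one kernel-verified Lean document; each statement's English description precedes it below -/
import Mathlib

section
/- (Inverse second moment identity) Let M' be an m×n complex matrix with m ≤ n and full row rank, with rows R_1, ..., R_m. Let R_{−i} denote the span of the rows R_j for j ≠ i. Then ∑_{i=1}^m s_i(M')^{−2} = ∑_{i=1}^m dist(R_i, R_{−i})^{−2}, where s_1(M') ≥ ... ≥ s_m(M') are the singular values of M' and dist denotes Euclidean distance in ℂ^n. -/
/-!
Let `G = M Mᴴ`, the (transposed) Gram matrix of the rows `Rᵢ`; its eigenvalues are the `sᵢ²`, so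
the left side is `tr G⁻¹`. The vectors `wᵢ = ∑ⱼ (G⁻¹)ᵢⱼ Rⱼ` lie in the row space and satisfy
`⟪Rₖ, wᵢ⟫ = δₖᵢ`. So `wᵢ ⟂ R₋ᵢ`, the `Rᵢ`-coefficient of `wᵢ` is `⟪wᵢ, wᵢ⟫`, and
`Rᵢ = (Rᵢ - wᵢ/‖wᵢ‖²) + wᵢ/‖wᵢ‖²` is the orthogonal decomposition of `Rᵢ` along `R₋ᵢ`. Hence `dist(Rᵢ, R₋ᵢ) = ‖wᵢ‖⁻¹`, while `‖wᵢ‖² = (G⁻¹)ᵢᵢ`.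
-/

open Matrix ComplexOrder
open scoped InnerProductSpace

namespace Matrix

theorem IsHermitian.trace_inv {𝕜 n : Type*} [RCLike 𝕜] [Fintype n] [DecidableEq n]
    {A : Matrix n n 𝕜} (hA : A.IsHermitian) (h : ∀ i, hA.eigenvalues i ≠ 0) :
    A⁻¹.trace = ∑ i, ((hA.eigenvalues i : 𝕜))⁻¹ := by
  have hinv : A⁻¹ = Unitary.conjStarAlgAut 𝕜 _ hA.eigenvectorUnitary
      (diagonal fun i ↦ ((hA.eigenvalues i : 𝕜))⁻¹) := by
    refine inv_eq_right_inv ?_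
    nth_rewrite 1 [hA.spectral_theorem]
    rw [← map_mul, diagonal_mul_diagonal]
    simp [h]
  rw [hinv, Unitary.conjStarAlgAut_apply, trace_mul_cycle, Unitary.coe_star_mul_self, one_mul,
    trace_diagonal]

theorem gram_toLp_rows {𝕜 m n : Type*} [RCLike 𝕜] [Fintype n] (M : Matrix m n 𝕜) :
    gram 𝕜 (fun i ↦ WithLp.toLp 2 (M i)) = (M * Mᴴ)ᵀ := by
  ext i j
  simp [gram_apply, mul_apply, PiLp.inner_apply, RCLike.inner_apply]

end Matrix

section GramDual

variable {𝕜 E ι : Type*} [RCLike 𝕜] [NormedAddCommGroup E] [InnerProductSpace 𝕜 E]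

theorem Submodule.infDist_add_of_mem_orthogonal {K : Submodule 𝕜 E} {p y : E} (hp : p ∈ K)
    (hy : y ∈ Kᗮ) : Metric.infDist (p + y) K = ‖y‖ := by
  refine le_antisymm ?_ ((Metric.le_infDist ⟨0, K.zero_mem⟩).2 fun z hz ↦ ?_)
  · simpa [dist_eq_norm] using Metric.infDist_le_dist_of_mem (x := p + y) hp
  · have hpz : ⟪p - z, y⟫_𝕜 = 0 := hy _ (K.sub_mem hp hz)
    have hsq := norm_add_sq_eq_norm_sq_add_norm_sq_of_inner_eq_zero _ _ hpz
    rw [dist_eq_norm, show p + y - z = p - z + y by abel]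
    exact (mul_self_le_mul_self_iff (norm_nonneg _) (norm_nonneg _)).2
      (by nlinarith [mul_self_nonneg ‖p - z‖])

theorem infDist_span_image_ne_eq_inv_norm {v : ι → E} {w : E} {i : ι}
    (hw : w ∈ Submodule.span 𝕜 (Set.range v)) (hwi : ⟪v i, w⟫_𝕜 = 1)
    (hwk : ∀ k ≠ i, ⟪v k, w⟫_𝕜 = 0) :
    Metric.infDist (v i) (Submodule.span 𝕜 (v '' {j | j ≠ i})) = ‖w‖⁻¹ := by
  set W := Submodule.span 𝕜 (v '' {j | j ≠ i})
  have hwW : w ∈ Wᗮ := by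
    have hortho : W ⟂ 𝕜 ∙ w :=
      Submodule.isOrtho_span.2 fun _ ⟨k, hk, hx⟩ _ hy ↦ by rw [← hx, hy]; exact hwk k hk
    exact hortho.symm (Submodule.mem_span_singleton_self w)
  rw [← Set.insert_image_compl_eq_range, Submodule.span_insert, Submodule.mem_sup] at hw
  obtain ⟨_, hx, u, hu, hw_eq⟩ := hw
  obtain ⟨a, rfl⟩ := Submodule.mem_span_singleton.1 hx
  set c : 𝕜 := ((‖w‖ ^ 2 : ℝ) : 𝕜)
  have hc : c ≠ 0 := by
    have : w ≠ 0 := by rintro rfl; simp at hwi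
    simpa [c] using this
  -- pairing `w` with its own expansion, only the `v i` coefficient survives
  have ha : a = c := by
    have : c = starRingEnd 𝕜 a := by
      calc c = ⟪w, w⟫_𝕜 := by simp [c, inner_self_eq_norm_sq_to_K]
        _ = ⟪a • v i + u, w⟫_𝕜 := by rw [hw_eq]
        _ = starRingEnd 𝕜 a := by
          rw [inner_add_left, inner_smul_left, hwi, Submodule.inner_right_of_mem_orthogonal hu hwW]
          simp
    rw [← RCLike.conj_conj a, ← this, RCLike.conj_ofReal]
  have hvi : v i = -(c⁻¹ • u) + c⁻¹ • w := by
    rw [← hw_eq, ha, smul_add, smul_smul, inv_mul_cancel₀ hc, one_smul]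
    abel
  rw [hvi, Submodule.infDist_add_of_mem_orthogonal (W.neg_mem (W.smul_mem _ hu))
    (Wᗮ.smul_mem _ hwW), norm_smul, norm_inv]
  have hw0 : ‖w‖ ≠ 0 := by simpa [c] using hc
  simp only [c, RCLike.norm_ofReal, abs_sq]
  field_simp

variable [Fintype ι] [DecidableEq ι]

noncomputable def gramDual (G : Matrix ι ι 𝕜) (v : ι → E) (i : ι) : E := ∑ j, G⁻¹ i j • v j

variable {G : Matrix ι ι 𝕜} {v : ι → E}

theorem gramDual_mem_span (i : ι) : gramDual G v i ∈ Submodule.span 𝕜 (Set.range v) :=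
  Submodule.sum_mem _ fun j _ ↦ Submodule.smul_mem _ _ (Submodule.subset_span ⟨j, rfl⟩)

theorem inner_gramDual (hG : gram 𝕜 v = Gᵀ) (hdet : IsUnit G.det) (i k : ι) :
    ⟪v k, gramDual G v i⟫_𝕜 = (1 : Matrix ι ι 𝕜) i k := by
  rw [← nonsing_inv_mul G hdet, mul_apply, gramDual, inner_sum]
  refine Finset.sum_congr rfl fun j _ ↦ ?_
  rw [inner_smul_right, ← gram_apply, hG, transpose_apply]

theorem norm_sq_gramDual (hG : gram 𝕜 v = Gᵀ) (hdet : IsUnit G.det) (i : ι) :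
    ‖gramDual G v i‖ ^ 2 = RCLike.re (G⁻¹ i i) := by
  have : ⟪∑ j, G⁻¹ i j • v j, gramDual G v i⟫_𝕜 = starRingEnd 𝕜 (G⁻¹ i i) := by
    simp only [sum_inner, inner_smul_left, inner_gramDual hG hdet, one_apply]
    simp
  rw [← RCLike.conj_re, ← this]
  exact (inner_self_eq_norm_sq _).symm

end GramDual

theorem inverse_second_moment_identity_general
    (m n : ℕ) (M : Matrix (Fin m) (Fin n) ℂ)
    (row : Fin m → EuclideanSpace ℂ (Fin n))
    (hrow : ∀ i, row i = (WithLp.equiv 2 (Fin n → ℂ)).symm (M i))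
    (hrank : ∀ i, (Matrix.posSemidef_self_mul_conjTranspose M).1.eigenvalues i ≠ 0) :
    ∑ i : Fin m,
        (Real.sqrt ((Matrix.posSemidef_self_mul_conjTranspose M).1.eigenvalues i) ^ 2)⁻¹ =
      ∑ i : Fin m,
        (Metric.infDist (row i)
            (Submodule.span ℂ (row '' {j | j ≠ i}) : Set (EuclideanSpace ℂ (Fin n))) ^ 2)⁻¹ := by
  set hA := Matrix.posSemidef_self_mul_conjTranspose M
  have hdet : IsUnit (M * Mᴴ).det := by
    rw [hA.1.det_eq_prod_eigenvalues, isUnit_iff_ne_zero, Finset.prod_ne_zero_iff]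
    exact fun i _ ↦ Complex.ofReal_ne_zero.2 (hrank i)
  have hG : gram ℂ row = (M * Mᴴ)ᵀ := by
    rw [← gram_toLp_rows]
    exact congrArg _ (funext hrow)
  have hdist (i : Fin m) : Metric.infDist (row i) (Submodule.span ℂ (row '' {j | j ≠ i})) =
      ‖gramDual (M * Mᴴ) row i‖⁻¹ :=
    infDist_span_image_ne_eq_inv_norm (gramDual_mem_span i)
      (by rw [inner_gramDual hG hdet, one_apply_eq])
      (fun k hk ↦ by rw [inner_gramDual hG hdet, one_apply_ne hk.symm])
  calc ∑ i, (Real.sqrt (hA.1.eigenvalues i) ^ 2)⁻¹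
      = ∑ i, (hA.1.eigenvalues i)⁻¹ := by
        simp only [Real.sq_sqrt (hA.eigenvalues_nonneg _)]
    _ = RCLike.re (M * Mᴴ)⁻¹.trace := by
        simp [hA.1.trace_inv hrank, ← Complex.ofReal_inv]
    _ = ∑ i, ‖gramDual (M * Mᴴ) row i‖ ^ 2 := by
        simp only [trace, diag_apply, map_sum, norm_sq_gramDual hG hdet]
    _ = _ := by simp only [hdist, inv_pow, inv_inv]

/-- The inverse second moment identity: for a full row rank `m × n` complex matrix (`m ≤ n`),
the sum of the inverse squares of the singular values equals the sum of the inverse squares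
of the distances from each row to the span of the other rows. -/
theorem inverse_second_moment_identity
    (m n : ℕ) (hmn : m ≤ n) (M : Matrix (Fin m) (Fin n) ℂ)
    (row : Fin m → EuclideanSpace ℂ (Fin n))
    (hrow : ∀ i, row i = (WithLp.equiv 2 (Fin n → ℂ)).symm (M i))
    (hrank : ∀ i, (Matrix.posSemidef_self_mul_conjTranspose M).1.eigenvalues i ≠ 0) :
    ∑ i : Fin m,
        (Real.sqrt ((Matrix.posSemidef_self_mul_conjTranspose M).1.eigenvalues i) ^ 2)⁻¹ =
      ∑ i : Fin m,
        (Metric.infDist (row i)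
            (Submodule.span ℂ (row '' {j | j ≠ i}) : Set (EuclideanSpace ℂ (Fin n))) ^ 2)⁻¹ :=
  inverse_second_moment_identity_general m n M row hrow hrank
end

section
/- Let M be an n×n complex matrix, 0 ≤ k ≤ n−1, and set m = n − ⌈k/2⌉. Denote the rows of M by R_1, ..., R_n, and for i ∈ [m] let R_{−i} = span{R_j : j ∈ [m], j ≠ i}. Then there is an absolute constant c > 0 such that s_{n−k}(M) ≥ c·√(k/n)·min_{i∈[m]} dist(R_i, R_{−i}). -/
/-!
Conjugating the rows turns them into vectors `S j` with `⟪S j, v⟫ = (M v) j`. Let `V` be the span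
of the eigenvectors of `Mᴴ M` for its `k + 1` smallest eigenvalues, so that
`‖M v‖ ≤ s_{n-k} ‖v‖` on `V`, and let `T` be the span of the first `m` vectors `S j`; if the
distances are positive these are independent, so `W = V ⊓ T` has dimension at least
`k + 1 + m - n ≥ k / 2`.

Let `u j` be the component of `S j` orthogonal to the other `S l`. Since
`⟪u j, S l⟫ = δ_jl ‖u j‖²`, every `v ∈ T` satisfies `‖v‖² = ∑ j ⟪v, S j⟫ ⟪u j, v⟫ / ‖u j‖²`, and
Cauchy–Schwarz with `‖u j‖ ≥ D` gives `D² ≤ s_{n-k}² ∑ j |⟪u j / ‖u j‖, v⟫|²` for unit `v ∈ W`.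
Summing over an orthonormal basis of `W` and applying Bessel's inequality to each `u j / ‖u j‖`
yields `dim W · D² ≤ m · s_{n-k}²`.
-/

open Matrix ComplexOrder Metric Module Submodule
open scoped InnerProductSpace

theorem linearIndependent_of_forall_infDist_pos {K E ι : Type*} [DivisionRing K]
    [SeminormedAddCommGroup E] [Module K E] {S : ι → E}
    (h : ∀ j, 0 < infDist (S j) (span K (S '' {l | l ≠ j}))) : LinearIndependent K S := by
  refine linearIndependent_iff_notMem_span.2 fun j hj => (h j).ne' (infDist_zero_of_mem ?_)
  simpa [Set.compl_def, ← Set.compl_eq_univ_sdiff] using hj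

theorem LinearIsometry.infDist_span_image {R R₂ E E₂ : Type*} [Semiring R] [Semiring R₂]
    {σ : R →+* R₂} [RingHomSurjective σ] [SeminormedAddCommGroup E] [SeminormedAddCommGroup E₂]
    [Module R E] [Module R₂ E₂] (f : E →ₛₗᵢ[σ] E₂) (x : E) (s : Set E) :
    infDist (f x) (span R₂ (f '' s)) = infDist x (span R s) := by
  rw [← f.coe_toLinearMap, span_image, map_coe, f.coe_toLinearMap, infDist_image f.isometry]

theorem Submodule.finrank_add_finrank_le_finrank_inf_add {K V : Type*} [DivisionRing K]
    [AddCommGroup V] [Module K V] [FiniteDimensional K V] (s t : Submodule K V) :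
    finrank K s + finrank K t ≤ finrank K ↥(s ⊓ t) + finrank K V := by
  linarith [finrank_sup_add_finrank_inf_eq s t, (s ⊔ t).finrank_le]

section OrthogonalToOthers

variable {𝕜 E ι : Type*} [RCLike 𝕜] [NormedAddCommGroup E] [InnerProductSpace 𝕜 E]
  [FiniteDimensional 𝕜 E] (S : ι → E)

variable (𝕜) in
noncomputable def orthogonalToOthers (j : ι) : E :=
  S j - (span 𝕜 (S '' {l | l ≠ j})).starProjection (S j)

theorem inner_orthogonalToOthers_of_ne {j l : ι} (h : l ≠ j) :
    ⟪orthogonalToOthers 𝕜 S j, S l⟫_𝕜 = 0 :=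
  (mem_orthogonal' _ _).1 (sub_starProjection_mem_orthogonal _) _ (subset_span ⟨l, h, rfl⟩)

theorem inner_orthogonalToOthers_self (j : ι) :
    ⟪orthogonalToOthers 𝕜 S j, S j⟫_𝕜 = (‖orthogonalToOthers 𝕜 S j‖ ^ 2 : ℝ) := by
  set K := span 𝕜 (S '' {l | l ≠ j})
  have hperp : ⟪orthogonalToOthers 𝕜 S j, K.starProjection (S j)⟫_𝕜 = 0 :=
    inner_left_of_mem_orthogonal (K.starProjection_apply_mem _)
      (sub_starProjection_mem_orthogonal _)
  calc ⟪orthogonalToOthers 𝕜 S j, S j⟫_𝕜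
      = ⟪orthogonalToOthers 𝕜 S j, orthogonalToOthers 𝕜 S j + K.starProjection (S j)⟫_𝕜 := by
        rw [orthogonalToOthers, sub_add_cancel]
    _ = (‖orthogonalToOthers 𝕜 S j‖ ^ 2 : ℝ) := by
        rw [inner_add_right, hperp, add_zero, inner_self_eq_norm_sq_to_K, RCLike.ofReal_pow]

theorem infDist_le_norm_orthogonalToOthers (j : ι) :
    infDist (S j) (span 𝕜 (S '' {l | l ≠ j})) ≤ ‖orthogonalToOthers 𝕜 S j‖ := by
  rw [orthogonalToOthers, ← dist_eq_norm]
  exact infDist_le_dist_of_mem (starProjection_apply_mem _ _)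

theorem norm_sq_le_of_mem_span_range [Fintype ι] (hS : ∀ j, orthogonalToOthers 𝕜 S j ≠ 0)
    {v : E} (hv : v ∈ span 𝕜 (Set.range S)) :
    ‖v‖ ^ 2 ≤ ∑ j, ‖⟪S j, v⟫_𝕜‖ * ‖⟪orthogonalToOthers 𝕜 S j, v⟫_𝕜‖ /
      ‖orthogonalToOthers 𝕜 S j‖ ^ 2 := by
  obtain ⟨a, ha⟩ := (mem_span_range_iff_exists_fun 𝕜).1 hv
  set u := orthogonalToOthers 𝕜 S
  have hcoef : ∀ j, ⟪u j, v⟫_𝕜 = a j * (‖u j‖ ^ 2 : ℝ) := by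
    intro j
    rw [← ha, inner_sum, Finset.sum_eq_single j]
    · rw [inner_smul_right, inner_orthogonalToOthers_self]
    · intro l _ hl
      rw [inner_smul_right, inner_orthogonalToOthers_of_ne S hl, mul_zero]
    · simp
  have hcoef_norm : ∀ j, ‖a j‖ = ‖⟪u j, v⟫_𝕜‖ / ‖u j‖ ^ 2 := fun j => by
    rw [hcoef, norm_mul, RCLike.norm_ofReal, abs_of_nonneg (by positivity),
      mul_div_cancel_right₀ _ (pow_ne_zero _ (norm_ne_zero_iff.2 (hS j)))]
  calc ‖v‖ ^ 2 = RCLike.re ⟪v, ∑ j, a j • S j⟫_𝕜 := by rw [ha, inner_self_eq_norm_sq]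
    _ ≤ ‖∑ j, a j * ⟪v, S j⟫_𝕜‖ := by
      simp only [inner_sum, inner_smul_right]
      exact RCLike.re_le_norm _
    _ ≤ ∑ j, ‖a j * ⟪v, S j⟫_𝕜‖ := norm_sum_le _ _
    _ = _ := Finset.sum_congr rfl fun j _ => by
      rw [norm_mul, hcoef_norm, norm_inner_symm v]
      ring

theorem sq_le_of_mem_span_range_of_norm_eq_one [Fintype ι] {D c : ℝ} (hD : 0 < D)
    (hdist : ∀ j, D ≤ infDist (S j) (span 𝕜 (S '' {l | l ≠ j})))
    {v : E} (hv : v ∈ span 𝕜 (Set.range S)) (hv1 : ‖v‖ = 1)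
    (hSv : ∑ j, ‖⟪S j, v⟫_𝕜‖ ^ 2 ≤ c) :
    D ^ 2 ≤ c * ∑ j, (‖⟪orthogonalToOthers 𝕜 S j, v⟫_𝕜‖ / ‖orthogonalToOthers 𝕜 S j‖) ^ 2 := by
  set u := orthogonalToOthers 𝕜 S
  have hDu : ∀ j, D ≤ ‖u j‖ := fun j => (hdist j).trans (infDist_le_norm_orthogonalToOthers S j)
  have hu : ∀ j, 0 < ‖u j‖ := fun j => hD.trans_le (hDu j)
  have hsum : D ≤ ∑ j, ‖⟪S j, v⟫_𝕜‖ * (‖⟪u j, v⟫_𝕜‖ / ‖u j‖) := by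
    have h := norm_sq_le_of_mem_span_range S (fun j => norm_pos_iff.1 (hu j)) hv
    rw [hv1, one_pow] at h
    calc D ≤ D * ∑ j, ‖⟪S j, v⟫_𝕜‖ * ‖⟪u j, v⟫_𝕜‖ / ‖u j‖ ^ 2 := le_mul_of_one_le_right hD.le h
      _ = ∑ j, D / ‖u j‖ * (‖⟪S j, v⟫_𝕜‖ * (‖⟪u j, v⟫_𝕜‖ / ‖u j‖)) := by
        rw [Finset.mul_sum]
        exact Finset.sum_congr rfl fun j _ => by field_simp
      _ ≤ ∑ j, ‖⟪S j, v⟫_𝕜‖ * (‖⟪u j, v⟫_𝕜‖ / ‖u j‖) := Finset.sum_le_sum fun j _ =>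
        mul_le_of_le_one_left (by positivity) ((div_le_one (hu j)).2 (hDu j))
  calc D ^ 2 ≤ (∑ j, ‖⟪S j, v⟫_𝕜‖ * (‖⟪u j, v⟫_𝕜‖ / ‖u j‖)) ^ 2 := by gcongr
    _ ≤ (∑ j, ‖⟪S j, v⟫_𝕜‖ ^ 2) * ∑ j, (‖⟪u j, v⟫_𝕜‖ / ‖u j‖) ^ 2 :=
      Finset.sum_mul_sq_le_sq_mul_sq _ _ _
    _ ≤ c * ∑ j, (‖⟪u j, v⟫_𝕜‖ / ‖u j‖) ^ 2 := by gcongr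

theorem finrank_mul_sq_le_card_mul [Fintype ι] {W : Submodule 𝕜 E} (hW : W ≤ span 𝕜 (Set.range S))
    {D c : ℝ} (hD : 0 < D) (hc : 0 ≤ c)
    (hdist : ∀ j, D ≤ infDist (S j) (span 𝕜 (S '' {l | l ≠ j})))
    (hWc : ∀ v ∈ W, ∑ j, ‖⟪S j, v⟫_𝕜‖ ^ 2 ≤ c * ‖v‖ ^ 2) :
    finrank 𝕜 W * D ^ 2 ≤ Fintype.card ι * c := by
  set u := orthogonalToOthers 𝕜 S
  set e : Fin (finrank 𝕜 W) → E := fun t => stdOrthonormalBasis 𝕜 W t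
  have he : Orthonormal 𝕜 e :=
    (stdOrthonormalBasis 𝕜 W).orthonormal.comp_linearIsometry W.subtypeₗᵢ
  have heW : ∀ t, e t ∈ W := fun t => (stdOrthonormalBasis 𝕜 W t).2
  have hBessel : ∀ j, ∑ t, (‖⟪u j, e t⟫_𝕜‖ / ‖u j‖) ^ 2 ≤ 1 := fun j => by
    simp_rw [div_pow, ← Finset.sum_div, norm_inner_symm (u j)]
    exact div_le_one_of_le₀ (he.sum_inner_products_le (u j)) (by positivity)
  calc finrank 𝕜 W * D ^ 2 = ∑ _t : Fin (finrank 𝕜 W), D ^ 2 := by simp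
    _ ≤ ∑ t, c * ∑ j, (‖⟪u j, e t⟫_𝕜‖ / ‖u j‖) ^ 2 := Finset.sum_le_sum fun t _ =>
      sq_le_of_mem_span_range_of_norm_eq_one S hD hdist (hW (heW t)) (he.1 t)
        (by simpa [he.1 t] using hWc _ (heW t))
    _ = c * ∑ j, ∑ t, (‖⟪u j, e t⟫_𝕜‖ / ‖u j‖) ^ 2 := by rw [← Finset.mul_sum, Finset.sum_comm]
    _ ≤ c * ∑ _j : ι, 1 := by gcongr with j; exact hBessel j
    _ = Fintype.card ι * c := by simp [mul_comm]

end OrthogonalToOthers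

theorem re_inner_map_self_le_of_mem_span_eigenvectors {𝕜 E ι : Type*} [RCLike 𝕜]
    [NormedAddCommGroup E] [InnerProductSpace 𝕜 E] [Fintype ι] {T : E →ₗ[𝕜] E} {b : ι → E}
    (hb : Orthonormal 𝕜 b) {μ : ι → ℝ} (hTb : ∀ i, T (b i) = (μ i : 𝕜) • b i) {c : ℝ}
    (hμ : ∀ i, μ i ≤ c) {v : E} (hv : v ∈ span 𝕜 (Set.range b)) :
    RCLike.re ⟪v, T v⟫_𝕜 ≤ c * ‖v‖ ^ 2 := by
  obtain ⟨a, rfl⟩ := (mem_span_range_iff_exists_fun 𝕜).1 hv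
  have hTv : T (∑ i, a i • b i) = ∑ i, (a i * μ i) • b i := by
    simp only [map_sum, map_smul, hTb, smul_smul]
  rw [hTv, ← inner_self_eq_norm_sq (𝕜 := 𝕜), hb.inner_sum, hb.inner_sum, map_sum,
    map_sum, Finset.mul_sum]
  refine Finset.sum_le_sum fun i _ => ?_
  rw [← mul_assoc, RCLike.conj_mul, ← RCLike.ofReal_pow, ← RCLike.ofReal_mul, RCLike.ofReal_re,
    RCLike.ofReal_re, mul_comm c]
  exact mul_le_mul_of_nonneg_left (hμ i) (sq_nonneg _)

theorem Matrix.exists_finrank_eq_forall_norm_toEuclideanLin_sq_le {𝕜 n : Type*} [RCLike 𝕜]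
    [Fintype n] [DecidableEq n] (M : Matrix n n 𝕜) (J : Finset n) {c : ℝ}
    (hJ : ∀ j ∈ J, (isHermitian_conjTranspose_mul_self M).eigenvalues j ≤ c) :
    ∃ V : Submodule 𝕜 (EuclideanSpace 𝕜 n), finrank 𝕜 V = J.card ∧
      ∀ v ∈ V, ‖toEuclideanLin M v‖ ^ 2 ≤ c * ‖v‖ ^ 2 := by
  set hA := isHermitian_conjTranspose_mul_self M
  set b : J → EuclideanSpace 𝕜 n := fun j => hA.eigenvectorBasis j
  have hb : Orthonormal 𝕜 b := hA.eigenvectorBasis.orthonormal.comp _ Subtype.val_injective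
  have hAb : ∀ j, toEuclideanLin (Mᴴ * M) (b j) = (hA.eigenvalues j : 𝕜) • b j := fun j => by
    rw [toLpLin_apply, hA.mulVec_eigenvectorBasis, ← RCLike.real_smul_eq_coe_smul]
    rfl
  refine ⟨span 𝕜 (Set.range b), by rw [finrank_span_eq_card hb.linearIndependent,
    Fintype.card_coe], fun v hv => ?_⟩
  have hnorm : ‖toEuclideanLin M v‖ ^ 2 = RCLike.re ⟪v, toEuclideanLin (Mᴴ * M) v⟫_𝕜 := by
    rw [toLpLin_mul 2 2 2, toEuclideanLin_conjTranspose_eq_adjoint, LinearMap.comp_apply,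
      LinearMap.adjoint_inner_right, inner_self_eq_norm_sq]
  rw [hnorm]
  exact re_inner_map_self_le_of_mem_span_eigenvectors hb hAb (fun j => hJ j j.2) hv

section Conj

variable {𝕜 ι : Type*} [RCLike 𝕜] [Fintype ι]

noncomputable def EuclideanSpace.conjLI : EuclideanSpace 𝕜 ι →ₗᵢ⋆[𝕜] EuclideanSpace 𝕜 ι where
  toFun x := WithLp.toLp 2 fun i => starRingEnd 𝕜 (x i)
  map_add' x y := by ext; simp
  map_smul' c x := by ext; simp
  norm_map' x := by simp [EuclideanSpace.norm_eq]

theorem EuclideanSpace.inner_conjLI_toLp {m : Type*} (M : Matrix m ι 𝕜) (j : m)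
    (v : EuclideanSpace 𝕜 ι) :
    ⟪conjLI (WithLp.toLp 2 (M j)), v⟫_𝕜 = (M *ᵥ v.ofLp) j := by
  simp [conjLI, PiLp.inner_apply, mulVec, dotProduct, mul_comm]

theorem Matrix.sum_norm_inner_conjLI_row_sq_le {m : Type*} [Fintype m] [DecidableEq ι]
    (M : Matrix m ι 𝕜) (p : m → Prop) [DecidablePred p] (v : EuclideanSpace 𝕜 ι) :
    ∑ j : {j // p j}, ‖⟪EuclideanSpace.conjLI (WithLp.toLp 2 (M j)), v⟫_𝕜‖ ^ 2 ≤
      ‖toEuclideanLin M v‖ ^ 2 := by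
  simp only [EuclideanSpace.inner_conjLI_toLp, EuclideanSpace.norm_sq_eq, toLpLin_apply]
  rw [← Fintype.sum_subtype_add_sum_subtype p]
  exact le_add_of_nonneg_right (Finset.sum_nonneg fun _ _ => sq_nonneg _)

end Conj

theorem Matrix.exists_finrank_eq_sub_forall_norm_sq_le_of_antitone {𝕜 : Type*} [RCLike 𝕜] {n : ℕ}
    (M : Matrix (Fin n) (Fin n) 𝕜) {s : Fin n → ℝ} {σ : Equiv.Perm (Fin n)} (hs_anti : Antitone s)
    (hs : ∀ i, s i = √((isHermitian_conjTranspose_mul_self M).eigenvalues (σ i))) (a : Fin n) :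
    ∃ V : Submodule 𝕜 (EuclideanSpace 𝕜 (Fin n)), finrank 𝕜 V = n - a ∧
      ∀ v ∈ V, ‖toEuclideanLin M v‖ ^ 2 ≤ s a ^ 2 * ‖v‖ ^ 2 := by
  have hJ : ∀ j ∈ (Finset.Ici a).map σ.toEmbedding,
      (isHermitian_conjTranspose_mul_self M).eigenvalues j ≤ s a ^ 2 := by
    simp only [Finset.mem_map_equiv, Finset.mem_Ici]
    intro j hj
    have hsj : s (σ.symm j) = √((isHermitian_conjTranspose_mul_self M).eigenvalues j) := by
      rw [hs, σ.apply_symm_apply]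
    rw [← Real.sq_sqrt ((posSemidef_conjTranspose_mul_self M).eigenvalues_nonneg j), ← hsj]
    exact pow_le_pow_left₀ (hsj ▸ Real.sqrt_nonneg _) (hs_anti hj) 2
  simpa using M.exists_finrank_eq_forall_norm_toEuclideanLin_sq_le _ hJ

theorem half_mul_sqrt_div_mul_le {k n d m : ℕ} {D s : ℝ} (hn : 0 < n) (hs : 0 ≤ s) (hD : 0 ≤ D)
    (hkd : k ≤ 2 * d) (hmn : m ≤ n) (h : d * D ^ 2 ≤ m * s ^ 2) :
    1 / 2 * √(k / n) * D ≤ s := by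
  have hn' : (0 : ℝ) < n := by exact_mod_cast hn
  have hkd' : (k : ℝ) ≤ 2 * d := by exact_mod_cast hkd
  have hmn' : (m : ℝ) ≤ n := by exact_mod_cast hmn
  refine (pow_le_pow_iff_left₀ (by positivity) hs two_ne_zero).1 ?_
  calc (1 / 2 * √(k / n) * D) ^ 2 = k * D ^ 2 / (4 * n) := by
        rw [mul_pow, mul_pow, Real.sq_sqrt (by positivity)]
        field_simp
        ring
    _ ≤ s ^ 2 := by
      rw [div_le_iff₀ (by positivity)]
      nlinarith [mul_le_mul_of_nonneg_right hkd' (sq_nonneg D),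
        mul_le_mul_of_nonneg_right hmn' (sq_nonneg s)]

/-- For an `n × n` complex matrix `M`, `0 ≤ k ≤ n−1` and `m = n − ⌈k/2⌉`, the singular value
`s_{n−k}(M)` is at least `c·√(k/n)` times the minimum over `i ∈ [m]` of the distance from the
`i`-th row to the span of the other rows `R_j`, `j ∈ [m] \ {i}`, for an absolute constant
`c > 0`. -/
theorem singularValue_lower_bound_dist_rows :
    ∃ c : ℝ, 0 < c ∧
      ∀ (n k : ℕ) (hn : 0 < n) (hk : k ≤ n - 1),
        ∀ (M : Matrix (Fin n) (Fin n) ℂ) (row : Fin n → EuclideanSpace ℂ (Fin n)),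
          (∀ i, row i = (WithLp.equiv 2 (Fin n → ℂ)).symm (M i)) →
          ∀ (s : Fin n → ℝ) (σ : Equiv.Perm (Fin n)),
            Antitone s →
            (∀ i, s i =
              Real.sqrt ((Matrix.posSemidef_conjTranspose_mul_self M).1.eigenvalues (σ i))) →
            c * Real.sqrt ((k : ℝ) / n) *
                (⨅ i : {i : Fin n // (i : ℕ) < n - (k + 1) / 2},
                  Metric.infDist (row i.1)
                    (Submodule.span ℂ
                        (row '' {j | (j : ℕ) < n - (k + 1) / 2 ∧ j ≠ i.1}) :
                      Set (EuclideanSpace ℂ (Fin n)))) ≤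
              s ⟨n - 1 - k, by omega⟩ := by
  refine ⟨1 / 2, by norm_num, fun n k hn hk M row hrow s σ hs_anti hs => ?_⟩
  set m := n - (k + 1) / 2
  set a : Fin n := ⟨n - 1 - k, by omega⟩
  set D := ⨅ i : {i : Fin n // (i : ℕ) < m}, infDist (row i.1)
    (span ℂ (row '' {j | (j : ℕ) < m ∧ j ≠ i.1}) : Set (EuclideanSpace ℂ (Fin n)))
  have hsa : 0 ≤ s a := by rw [hs]; positivity
  have hD0 : 0 ≤ D := Real.iInf_nonneg fun _ => infDist_nonneg
  rcases hD0.eq_or_lt with hD | hD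
  · rw [← hD, mul_zero]; exact hsa
  obtain ⟨V, hVdim, hV⟩ := M.exists_finrank_eq_sub_forall_norm_sq_le_of_antitone hs_anti hs a
  set S : {i : Fin n // (i : ℕ) < m} → EuclideanSpace ℂ (Fin n) :=
    fun i => EuclideanSpace.conjLI (row i)
  have hdist : ∀ i, D ≤ infDist (S i) (span ℂ (S '' {l | l ≠ i})) := fun i => by
    have hS : S '' {l | l ≠ i} =
        EuclideanSpace.conjLI '' (row '' {j | (j : ℕ) < m ∧ j ≠ i.1}) := by
      ext
      simp only [S, Set.mem_image, Set.mem_ofPred_eq, Subtype.exists]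
      grind
    rw [hS, LinearIsometry.infDist_span_image]
    exact ciInf_le ⟨0, Set.forall_mem_range.2 fun _ => infDist_nonneg⟩ i
  have hT : finrank ℂ (span ℂ (Set.range S)) = m :=
    (finrank_span_eq_card (linearIndependent_of_forall_infDist_pos fun i =>
      hD.trans_le (hdist i))).trans (Fintype.card_fin_lt_of_le (Nat.sub_le _ _))
  have hVT := V.finrank_add_finrank_le_finrank_inf_add (span ℂ (Set.range S))
  rw [hVdim, hT, finrank_euclideanSpace_fin] at hVT
  have hWT := finrank_mul_sq_le_card_mul S inf_le_right hD (sq_nonneg (s a)) hdist fun v hv => by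
    simpa only [S, hrow, WithLp.equiv_symm_apply] using
      (M.sum_norm_inner_conjLI_row_sq_le _ v).trans (hV v (mem_inf.1 hv).1)
  rw [Fintype.card_fin_lt_of_le (Nat.sub_le _ _)] at hWT
  have ha : (a : ℕ) = n - 1 - k := rfl
  exact half_mul_sqrt_div_mul_le hn hsa hD.le (by omega) (Nat.sub_le _ _) hWT
end

section
/- Let ξ be a complex random variable with mean zero, unit variance (E|ξ|² = 1), and finite p-th moment μ_p^p = E|ξ|^p < ∞ for some p > 2. Then ξ is κ-spread with κ = 3(3μ_p^p)^{1/(p−2)}; that is, Var[ξ·1(|ξ − Eξ| ≤ κ)] ≥ 1/κ. -/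
/-!
Jensen's inequality gives `mp = E|ξ|ᵖ ≥ (E|ξ|²)^{p/2} = 1`, hence `κ ≥ 3` and `κ^{p-2} ≥ 3 mp`.
Write `η = ξ·1(|ξ| ≤ κ)`. The discarded part `ξ - η` lives where `|ξ| > κ`, so
`|ξ - η|^a ≤ |ξ|ᵖ / κ^{p-a}` for `a ≤ p`. With `a = 2` this gives `E|η|² ≥ 1 - mp/κ^{p-2} ≥ 2/3`;
with `a = 1` and `Eξ = 0` it gives `|Eη| = |E(ξ - η)| ≤ mp/κ^{p-1} ≤ 1/9`. Therefore
`Var η = E|η|² - |Eη|² ≥ 2/3 - 1/81 ≥ 1/3 ≥ 1/κ`.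
-/

open MeasureTheory

noncomputable def cVar {Ω : Type*} [MeasurableSpace Ω] (μ : Measure Ω) (X : Ω → ℂ) : ℝ :=
  ∫ ω, ‖X ω - ∫ ω', X ω' ∂μ‖ ^ 2 ∂μ

theorem Real.rpow_le_rpow_div_rpow_sub {κ x a p : ℝ} (hκ : 0 < κ) (hκx : κ ≤ x) (hap : a ≤ p) :
    x ^ a ≤ x ^ p / κ ^ (p - a) := by
  have hx : 0 < x := hκ.trans_le hκx
  rw [le_div_iff₀ (Real.rpow_pos_of_pos hκ _), show p = a + (p - a) by ring,
    Real.rpow_add hx, add_sub_cancel_left]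
  gcongr

theorem self_le_mul_rpow_one_div_rpow {a c q : ℝ} (ha : 1 ≤ a) (hc : 0 ≤ c) (hq : 0 < q) :
    c ≤ (a * c ^ (1 / q)) ^ q := by
  rw [Real.mul_rpow (by linarith) (by positivity), ← Real.rpow_mul hc, one_div_mul_cancel hq.ne',
    Real.rpow_one]
  exact le_mul_of_one_le_left hc (Real.one_le_rpow ha hq.le)

section Truncate

variable {E : Type*} [NormedAddCommGroup E]

noncomputable def truncate (κ : ℝ) (x : E) : E := if ‖x‖ ≤ κ then x else 0

theorem norm_truncate_le_norm (κ : ℝ) (x : E) : ‖truncate κ x‖ ≤ ‖x‖ := by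
  unfold truncate; split_ifs <;> simp

theorem norm_truncate_sq_add_norm_sub_truncate_sq (κ : ℝ) (x : E) :
    ‖truncate κ x‖ ^ 2 + ‖x - truncate κ x‖ ^ 2 = ‖x‖ ^ 2 := by
  unfold truncate; split_ifs <;> simp

theorem norm_sub_truncate_rpow_le {κ a p : ℝ} (hκ : 0 < κ) (ha : 0 < a) (hap : a ≤ p) (x : E) :
    ‖x - truncate κ x‖ ^ a ≤ ‖x‖ ^ p / κ ^ (p - a) := by
  unfold truncate
  split_ifs with h
  · rw [sub_self, norm_zero, Real.zero_rpow ha.ne']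
    positivity
  · rw [sub_zero]
    exact Real.rpow_le_rpow_div_rpow_sub hκ (not_le.mp h).le hap

theorem measurable_truncate [MeasurableSpace E] [OpensMeasurableSpace E] (κ : ℝ) :
    Measurable (truncate (E := E) κ) :=
  Measurable.ite (measurableSet_le measurable_norm measurable_const) measurable_id measurable_const

end Truncate

theorem MeasureTheory.MemLp.truncate {Ω : Type*} [MeasurableSpace Ω] {μ : Measure Ω} {X : Ω → ℂ}
    {p : ENNReal} (hX : MemLp X p μ) (κ : ℝ) : MemLp (fun ω => truncate κ (X ω)) p μ :=
  hX.mono ((measurable_truncate κ).comp_aemeasurable hX.aemeasurable).aestronglyMeasurable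
    (ae_of_all _ fun ω => norm_truncate_le_norm κ (X ω))

section Moments

variable {Ω : Type*} [MeasurableSpace Ω] {μ : Measure Ω}

theorem cVar_eq_integral_norm_sq_sub [IsProbabilityMeasure μ] {X : Ω → ℂ} (hX : MemLp X 2 μ) :
    cVar μ X = ∫ ω, ‖X ω‖ ^ 2 ∂μ - ‖∫ ω, X ω ∂μ‖ ^ 2 := by
  set c := ∫ ω, X ω ∂μ
  have hXi : Integrable X μ := hX.integrable one_le_two
  have hX2 : Integrable (fun ω => ‖X ω‖ ^ 2) μ := hX.integrable_norm_pow two_ne_zero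
  have hinner : Integrable (fun ω => 2 * inner ℝ c (X ω)) μ := (hXi.const_inner c).const_mul 2
  have hdiff : Integrable (fun ω => ‖X ω‖ ^ 2 - 2 * inner ℝ c (X ω)) μ := hX2.sub hinner
  calc cVar μ X = ∫ ω, (‖X ω‖ ^ 2 - 2 * inner ℝ c (X ω) + ‖c‖ ^ 2) ∂μ := by
        unfold cVar
        congr with ω
        rw [norm_sub_sq_real, real_inner_comm]
    _ = ∫ ω, ‖X ω‖ ^ 2 ∂μ - 2 * inner ℝ c c + ‖c‖ ^ 2 := by
        rw [integral_add hdiff (integrable_const _), integral_sub hX2 hinner,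
          integral_const_mul, integral_inner hXi, integral_const, probReal_univ, one_smul]
    _ = ∫ ω, ‖X ω‖ ^ 2 ∂μ - ‖c‖ ^ 2 := by
        rw [real_inner_self_eq_norm_sq]; ring

variable {E : Type*} [NormedAddCommGroup E] {X : Ω → E}

theorem integral_norm_sq_rpow_le_integral_norm_rpow [IsProbabilityMeasure μ] {p : ℝ} (hp : 2 ≤ p)
    (hX2 : Integrable (fun ω => ‖X ω‖ ^ 2) μ) (hXp : Integrable (fun ω => ‖X ω‖ ^ p) μ) :
    (∫ ω, ‖X ω‖ ^ 2 ∂μ) ^ (p / 2) ≤ ∫ ω, ‖X ω‖ ^ p ∂μ := by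
  have hsq_rpow (ω : Ω) : (‖X ω‖ ^ 2) ^ (p / 2) = ‖X ω‖ ^ p := by
    rw [← Real.rpow_natCast, ← Real.rpow_mul (norm_nonneg _)]
    congr 1; push_cast; ring
  have hjensen := (convexOn_rpow ((one_le_div two_pos).mpr hp)).map_integral_le
    (Real.continuous_rpow_const (by positivity)).continuousOn isClosed_Ici
    (ae_of_all _ fun ω => sq_nonneg ‖X ω‖) hX2 (by simpa only [Function.comp_def, hsq_rpow])
  simpa only [hsq_rpow] using hjensen

theorem integral_norm_sub_truncate_rpow_le {κ a p : ℝ} (hκ : 0 < κ) (ha : 0 < a) (hap : a ≤ p)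
    (hXp : Integrable (fun ω => ‖X ω‖ ^ p) μ) :
    ∫ ω, ‖X ω - truncate κ (X ω)‖ ^ a ∂μ ≤ (∫ ω, ‖X ω‖ ^ p ∂μ) / κ ^ (p - a) := by
  rw [← integral_div]
  exact integral_mono_of_nonneg (ae_of_all _ fun ω => by positivity) (hXp.div_const _)
    (ae_of_all _ fun ω => norm_sub_truncate_rpow_le hκ ha hap (X ω))

end Moments

section TruncatedMoments

variable {Ω : Type*} [MeasurableSpace Ω] {μ : Measure Ω} {X : Ω → ℂ} {κ p : ℝ}

theorem sub_le_integral_norm_truncate_sq (hκ : 0 < κ) (hp : 2 ≤ p) (hX : MemLp X 2 μ)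
    (hXp : Integrable (fun ω => ‖X ω‖ ^ p) μ) :
    ∫ ω, ‖X ω‖ ^ 2 ∂μ - (∫ ω, ‖X ω‖ ^ p ∂μ) / κ ^ (p - 2) ≤
      ∫ ω, ‖truncate κ (X ω)‖ ^ 2 ∂μ := by
  have htail := integral_norm_sub_truncate_rpow_le (μ := μ) (X := X) hκ two_pos hp hXp
  simp only [Real.rpow_two] at htail
  have hsplit : ∫ ω, ‖truncate κ (X ω)‖ ^ 2 ∂μ =
      ∫ ω, ‖X ω‖ ^ 2 ∂μ - ∫ ω, ‖X ω - truncate κ (X ω)‖ ^ 2 ∂μ := by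
    have hdiff : Integrable (fun ω => ‖X ω - truncate κ (X ω)‖ ^ 2) μ :=
      (hX.sub (hX.truncate κ)).integrable_norm_pow two_ne_zero
    rw [← integral_sub (hX.integrable_norm_pow two_ne_zero) hdiff]
    congr with ω
    rw [← norm_truncate_sq_add_norm_sub_truncate_sq κ (X ω), add_sub_cancel_right]
  linarith

theorem norm_integral_truncate_le (hκ : 0 < κ) (hp : 1 ≤ p) (hXi : Integrable X μ)
    (hmean : ∫ ω, X ω ∂μ = 0) (hXp : Integrable (fun ω => ‖X ω‖ ^ p) μ) :
    ‖∫ ω, truncate κ (X ω) ∂μ‖ ≤ (∫ ω, ‖X ω‖ ^ p ∂μ) / κ ^ (p - 1) := by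
  have htail := integral_norm_sub_truncate_rpow_le (μ := μ) (X := X) hκ one_pos hp hXp
  simp only [Real.rpow_one] at htail
  have htrunc_i : Integrable (fun ω => truncate κ (X ω)) μ :=
    memLp_one_iff_integrable.1 ((memLp_one_iff_integrable.2 hXi).truncate κ)
  calc ‖∫ ω, truncate κ (X ω) ∂μ‖ = ‖∫ ω, (X ω - truncate κ (X ω)) ∂μ‖ := by
        rw [integral_sub hXi htrunc_i, hmean, zero_sub, norm_neg]
    _ ≤ ∫ ω, ‖X ω - truncate κ (X ω)‖ ∂μ := norm_integral_le_integral_norm _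
    _ ≤ _ := htail

end TruncatedMoments

/-- A complex random variable with mean zero, unit variance and finite `p`-th moment
`E|ξ|ᵖ = mp` for some `p > 2` is `κ`-spread with `κ = 3(3·mp)^{1/(p−2)}`, i.e. the variance
of the truncation `ξ·1(|ξ − Eξ| ≤ κ)` is at least `1/κ`. -/
theorem spread_of_finite_moment
    {Ω : Type*} [MeasurableSpace Ω] (μ : Measure Ω) [IsProbabilityMeasure μ]
    (ξ : Ω → ℂ) (p mp : ℝ) (hp : 2 < p)
    (hmem : MemLp ξ (ENNReal.ofReal p) μ)
    (hmean : ∫ ω, ξ ω ∂μ = 0)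
    (hvar : ∫ ω, ‖ξ ω‖ ^ 2 ∂μ = 1)
    (hmp : ∫ ω, ‖ξ ω‖ ^ p ∂μ = mp) :
    1 / (3 * (3 * mp) ^ (1 / (p - 2))) ≤
      cVar μ (fun ω =>
        if ‖ξ ω - ∫ ω', ξ ω' ∂μ‖ ≤ 3 * (3 * mp) ^ (1 / (p - 2)) then ξ ω else 0) := by
  have hp0 : 0 < p := by linarith
  have hX2 : MemLp ξ 2 μ :=
    hmem.mono_exponent (by simpa using ENNReal.ofReal_le_ofReal hp.le)
  have hXp : Integrable (fun ω => ‖ξ ω‖ ^ p) μ := by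
    simpa only [ENNReal.toReal_ofReal hp0.le] using
      hmem.integrable_norm_rpow (by simpa using hp0) ENNReal.ofReal_ne_top
  have hmp1 : 1 ≤ mp := by
    simpa only [hvar, hmp, Real.one_rpow] using
      integral_norm_sq_rpow_le_integral_norm_rpow hp.le (hX2.integrable_norm_pow two_ne_zero) hXp
  set κ := 3 * (3 * mp) ^ (1 / (p - 2))
  have hκ3 : 3 ≤ κ := by
    have := Real.one_le_rpow (by linarith : 1 ≤ 3 * mp) (by bound : 0 ≤ 1 / (p - 2))
    linarith
  have hκ0 : 0 < κ := by linarith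
  have htail_sq : mp / κ ^ (p - 2) ≤ 1 / 3 := by
    have := self_le_mul_rpow_one_div_rpow (by norm_num : (1 : ℝ) ≤ 3) (by linarith : 0 ≤ 3 * mp)
      (by linarith : 0 < p - 2)
    rw [div_le_iff₀ (by positivity)]
    linarith
  have htail_mean : mp / κ ^ (p - 1) ≤ 1 / 9 := by
    rw [show p - 1 = p - 2 + 1 by ring, Real.rpow_add_one hκ0.ne', ← div_div]
    calc mp / κ ^ (p - 2) / κ ≤ (1 / 3) / 3 := div_le_div₀ (by norm_num) htail_sq (by norm_num) hκ3
      _ = 1 / 9 := by norm_num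
  simp only [hmean, sub_zero]
  change 1 / κ ≤ cVar μ (fun ω => truncate κ (ξ ω))
  rw [cVar_eq_integral_norm_sq_sub (hX2.truncate κ)]
  have hsq_trunc := sub_le_integral_norm_truncate_sq hκ0 hp.le hX2 hXp
  have hmean_trunc :=
    norm_integral_truncate_le hκ0 (by linarith) (hX2.integrable one_le_two) hmean hXp
  rw [hvar, hmp] at hsq_trunc
  rw [hmp] at hmean_trunc
  have hmean_sq : ‖∫ ω, truncate κ (ξ ω) ∂μ‖ ^ 2 ≤ (1 / 9) ^ 2 := by
    gcongr; exact hmean_trunc.trans htail_mean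
  calc 1 / κ ≤ 1 / 3 := by gcongr
    _ ≤ (1 - 1 / 3) - (1 / 9) ^ 2 := by norm_num
    _ ≤ _ := by linarith
end

section
/- Let A ∈ {0,1}^{n×n} have all row and column sums equal to d = ⌊pn⌋. Suppose J ⊆ [n] satisfies (1 + p/4)|J| ≤ n, and suppose the set I_0 of rows i with |N(i) ∩ J| ≥ (p/2)|J| satisfies |I_0| < (1 + p/8)|J|. Then, setting I = [n] \ I_0, we have |I| ≥ (p/8)|J| and the edge count e_A(I, J) = ∑_{i∈I}|N(i)∩J| < (p/2)|I||J|. -/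
/-- Failure of broad connectivity produces a sparse patch: if all row and column sums of the
0-1 matrix `A` equal `⌊pn⌋`, `(1 + p/4)|J| ≤ n`, and the set `I₀` of rows meeting `J` in at
least `(p/2)|J|` ones has `|I₀| < (1 + p/8)|J|`, then its complement `I` satisfies
`|I| ≥ (p/8)|J|` and the edge count satisfies `e_A(I, J) < (p/2)|I||J|`. -/
theorem sparse_patch_of_broad_connectivity_failure
    (n : ℕ) (p : ℝ) (hp : p ∈ Set.Ioo (0 : ℝ) 1)
    (A : Matrix (Fin n) (Fin n) ℕ) (h01 : ∀ i j, A i j = 0 ∨ A i j = 1)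
    (hrow : ∀ i : Fin n, ∑ j : Fin n, A i j = ⌊p * n⌋₊)
    (hcol : ∀ j : Fin n, ∑ i : Fin n, A i j = ⌊p * n⌋₊)
    (J : Finset (Fin n)) (hJ : J.Nonempty)
    (hJn : (1 + p / 4) * J.card ≤ (n : ℝ))
    (I₀ : Finset (Fin n))
    (hI₀ : I₀ = Finset.univ.filter
      (fun i : Fin n => (p / 2) * J.card ≤ ((∑ j ∈ J, A i j : ℕ) : ℝ)))
    (hsmall : (I₀.card : ℝ) < (1 + p / 8) * J.card) :
    (p / 8) * J.card ≤ ((I₀ᶜ.card : ℕ) : ℝ) ∧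
      ((∑ i ∈ I₀ᶜ, ∑ j ∈ J, A i j : ℕ) : ℝ) < (p / 2) * I₀ᶜ.card * J.card := by
  have hle : I₀.card ≤ n := by
    simpa using Finset.card_le_card (Finset.subset_univ I₀)
  have hcompl : (I₀ᶜ.card : ℝ) = (n : ℝ) - I₀.card := by
    have := Finset.card_compl I₀
    rw [this, Fintype.card_fin]
    exact Nat.cast_sub hle
  have h1 : (p / 8) * J.card ≤ ((I₀ᶜ.card : ℕ) : ℝ) := by
    rw [hcompl]; nlinarith [hsmall, hJn]
  refine ⟨h1, ?_⟩
  have hJpos : (0 : ℝ) < (J.card : ℝ) := by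
    exact_mod_cast Finset.card_pos.mpr hJ
  have hIpos : (0 : ℝ) < (I₀ᶜ.card : ℝ) := by
    have hp8 : (0 : ℝ) < p / 8 := by linarith [hp.1]
    nlinarith [h1]
  have hIne : I₀ᶜ.Nonempty := by
    rw [← Finset.card_pos]
    exact_mod_cast hIpos
  have hrowlt : ∀ i ∈ I₀ᶜ, ((∑ j ∈ J, A i j : ℕ) : ℝ) < (p / 2) * J.card := by
    intro i hi
    rw [Finset.mem_compl, hI₀, Finset.mem_filter] at hi
    push_neg at hi
    exact hi (Finset.mem_univ i)
  calc ((∑ i ∈ I₀ᶜ, ∑ j ∈ J, A i j : ℕ) : ℝ)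
      = ∑ i ∈ I₀ᶜ, ((∑ j ∈ J, A i j : ℕ) : ℝ) := by push_cast; ring
    _ < ∑ i ∈ I₀ᶜ, (p / 2) * J.card := Finset.sum_lt_sum_of_nonempty hIne hrowlt
    _ = (p / 2) * I₀ᶜ.card * J.card := by
        rw [Finset.sum_const, nsmul_eq_mul]; ring
end

section
/- Let H_0 be a fixed Hermitian n×n matrix and f : ℝ → ℝ convex and L-Lipschitz. Then the map H ↦ (1/n)∑_{i=1}^n f(λ_i(H + H_0)), defined on the real vector space of n×n Hermitian matrices equipped with the Hilbert–Schmidt (Frobenius) norm, is convex and (L/√n)-Lipschitz, where λ_1, ..., λ_n denote the eigenvalues of the Hermitian matrix. -/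
/-!
For Hermitian `A` with eigenvector matrix `U` and any unitary `W`, the diagonal of `Wᴴ A W` is
`λ(A)` times the doubly stochastic matrix `(|(Uᴴ W)ᵢₖ|²)`, so Jensen gives
`∑ₖ f((Wᴴ A W)ₖₖ) ≤ ∑ᵢ f(λᵢ(A))` for convex `f`; taking for `W` an eigenbasis of `a A + b B`
yields convexity of `A ↦ tr f(A)`. For the Lipschitz bound, with `U`, `V` eigenbases of `A`, `B`
the weights `Pᵢⱼ = |(Uᴴ V)ᵢⱼ|²` are doubly stochastic and `∑ Pᵢⱼ (λᵢ(A) - λⱼ(B))² = ‖A - B‖²_HS`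
(a weak form of Hoffman–Wielandt that avoids ordering the eigenvalues), so
`|tr f(A) - tr f(B)| ≤ L ∑ Pᵢⱼ |λᵢ(A) - λⱼ(B)| ≤ L √n ‖A - B‖_HS` by Cauchy–Schwarz.
-/

open Matrix

namespace Matrix

lemma convex_setOf_isHermitian {𝕜 ι : Type*} [RCLike 𝕜] :
    Convex ℝ {A : Matrix ι ι 𝕜 | A.IsHermitian} :=
  (selfAdjoint.submodule ℝ (Matrix ι ι 𝕜)).convex

variable {𝕜 ι : Type*} [RCLike 𝕜] [Fintype ι] [DecidableEq ι]

def entrywiseNormSq {m n : Type*} (M : Matrix m n 𝕜) : Matrix m n ℝ := fun i j => ‖M i j‖ ^ 2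

lemma re_conjTranspose_mul_self_apply {m n : Type*} [Fintype m] (M : Matrix m n 𝕜) (j : n) :
    RCLike.re ((Mᴴ * M) j j) = ∑ i, ‖M i j‖ ^ 2 := by
  simp only [mul_apply, conjTranspose_apply, ← starRingEnd_apply, RCLike.conj_mul, map_sum]
  norm_cast

lemma sum_sum_norm_sq_eq_re_trace {m n : Type*} [Fintype m] [Fintype n] (M : Matrix m n 𝕜) :
    ∑ i, ∑ j, ‖M i j‖ ^ 2 = RCLike.re (Mᴴ * M).trace := by
  simp only [trace, diag, map_sum, re_conjTranspose_mul_self_apply]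
  exact Finset.sum_comm

lemma entrywiseNormSq_mem_doublyStochastic {U : Matrix ι ι 𝕜} (hU : U ∈ unitaryGroup ι 𝕜) :
    entrywiseNormSq U ∈ doublyStochastic ℝ ι := by
  refine mem_doublyStochastic_iff_sum.2 ⟨fun i j => sq_nonneg _, fun i => ?_, fun j => ?_⟩
  · have h := re_conjTranspose_mul_self_apply Uᴴ i
    rw [conjTranspose_conjTranspose, ← star_eq_conjTranspose, Unitary.mul_star_self_of_mem hU,
      one_apply_eq, RCLike.one_re] at h
    simpa [entrywiseNormSq] using h.symm
  · have h := re_conjTranspose_mul_self_apply U j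
    rw [← star_eq_conjTranspose, Unitary.star_mul_self_of_mem hU, one_apply_eq, RCLike.one_re] at h
    exact h.symm

lemma sum_sum_norm_sq_unitary_mul_mul_unitary {U V : Matrix ι ι 𝕜} (hU : U ∈ unitaryGroup ι 𝕜)
    (hV : V ∈ unitaryGroup ι 𝕜) (M : Matrix ι ι 𝕜) :
    ∑ i, ∑ j, ‖(U * M * V) i j‖ ^ 2 = ∑ i, ∑ j, ‖M i j‖ ^ 2 := by
  have hU' : Uᴴ * U = 1 := Unitary.star_mul_self_of_mem hU
  have hV' : V * Vᴴ = 1 := Unitary.mul_star_self_of_mem hV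
  have hconj : (U * M * V)ᴴ * (U * M * V) = Vᴴ * (Mᴴ * M * V) := by
    simp only [conjTranspose_mul, mul_assoc]
    rw [← mul_assoc Uᴴ U, hU', one_mul]
  rw [sum_sum_norm_sq_eq_re_trace, sum_sum_norm_sq_eq_re_trace, hconj, trace_mul_comm]
  simp only [mul_assoc, hV', mul_one]

lemma re_conjTranspose_mul_diagonal_mul_apply (Q : Matrix ι ι 𝕜) (d : ι → ℝ) (k : ι) :
    RCLike.re ((Qᴴ * diagonal (fun i => (d i : 𝕜)) * Q) k k) = (d ᵥ* entrywiseNormSq Q) k := by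
  rw [mul_apply]
  simp only [mul_diagonal, conjTranspose_apply, vecMul, dotProduct, entrywiseNormSq, map_sum]
  refine Finset.sum_congr rfl fun i _ => ?_
  rw [mul_right_comm, ← starRingEnd_apply, RCLike.conj_mul, mul_comm]
  norm_cast

lemma _root_.ConvexOn.sum_map_vecMul_le {s : Set ℝ} {f : ℝ → ℝ} (hf : ConvexOn ℝ s f)
    {P : Matrix ι ι ℝ} (hP : P ∈ doublyStochastic ℝ ι) {x : ι → ℝ} (hx : ∀ i, x i ∈ s) :
    ∑ k, f ((x ᵥ* P) k) ≤ ∑ i, f (x i) :=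
  calc ∑ k, f ((x ᵥ* P) k)
      ≤ ∑ k, ∑ i, P i k * f (x i) := Finset.sum_le_sum fun k _ => by
        simpa only [vecMul, dotProduct, mul_comm (x _), smul_eq_mul] using
          hf.map_sum_le (fun i _ => nonneg_of_mem_doublyStochastic hP)
            (sum_col_of_mem_doublyStochastic hP k) fun i _ => hx i
    _ = ∑ i, f (x i) := by
        rw [Finset.sum_comm]
        simp only [← Finset.sum_mul, sum_row_of_mem_doublyStochastic hP, one_mul]

namespace IsHermitian

variable {A B : Matrix ι ι 𝕜} {f : ℝ → ℝ}

lemma re_conj_apply_eq_vecMul (hA : A.IsHermitian) (W : Matrix ι ι 𝕜) (k : ι) :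
    RCLike.re ((Wᴴ * A * W) k k) =
      (hA.eigenvalues ᵥ* entrywiseNormSq ((hA.eigenvectorUnitary : Matrix ι ι 𝕜)ᴴ * W)) k := by
  rw [← re_conjTranspose_mul_diagonal_mul_apply]
  conv_lhs => rw [hA.spectral_theorem]
  simp only [Unitary.conjStarAlgAut_apply, conjTranspose_mul, conjTranspose_conjTranspose,
    star_eq_conjTranspose, mul_assoc, Function.comp_def]

lemma conj_eigenvectorUnitary (hA : A.IsHermitian) :
    (hA.eigenvectorUnitary : Matrix ι ι 𝕜)ᴴ * A * hA.eigenvectorUnitary =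
      diagonal (fun i => (hA.eigenvalues i : 𝕜)) := by
  rw [← star_eq_conjTranspose, ← Unitary.conjStarAlgAut_star_apply (S := 𝕜),
    hA.conjStarAlgAut_star_eigenvectorUnitary]
  rfl

lemma re_conj_eigenvectorUnitary_apply (hA : A.IsHermitian) (k : ι) :
    RCLike.re (((hA.eigenvectorUnitary : Matrix ι ι 𝕜)ᴴ * A * hA.eigenvectorUnitary) k k) =
      hA.eigenvalues k := by
  simp [hA.conj_eigenvectorUnitary]

lemma sum_map_re_conj_apply_le (hA : A.IsHermitian) (hf : ConvexOn ℝ Set.univ f)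
    {W : Matrix ι ι 𝕜} (hW : W ∈ unitaryGroup ι 𝕜) :
    ∑ k, f (RCLike.re ((Wᴴ * A * W) k k)) ≤ ∑ i, f (hA.eigenvalues i) := by
  simp only [hA.re_conj_apply_eq_vecMul]
  refine hf.sum_map_vecMul_le (entrywiseNormSq_mem_doublyStochastic ?_) fun _ => Set.mem_univ _
  exact mul_mem (Unitary.star_mem hA.eigenvectorUnitary.2) hW

lemma sum_map_eigenvalues_smul_add_smul_le (hA : A.IsHermitian) (hB : B.IsHermitian)
    (hf : ConvexOn ℝ Set.univ f) {a b : ℝ} (hC : (a • A + b • B).IsHermitian) (ha : 0 ≤ a)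
    (hb : 0 ≤ b) (hab : a + b = 1) :
    ∑ k, f (hC.eigenvalues k) ≤ a * ∑ i, f (hA.eigenvalues i) + b * ∑ i, f (hB.eigenvalues i) := by
  set W : Matrix ι ι 𝕜 := (hC.eigenvectorUnitary : Matrix ι ι 𝕜)
  have hW : W ∈ unitaryGroup ι 𝕜 := hC.eigenvectorUnitary.2
  have hsplit : ∀ k, hC.eigenvalues k =
      a * RCLike.re ((Wᴴ * A * W) k k) + b * RCLike.re ((Wᴴ * B * W) k k) := fun k => by
    rw [← hC.re_conj_eigenvectorUnitary_apply]
    simp [W, mul_add, add_mul, RCLike.smul_re]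
  calc ∑ k, f (hC.eigenvalues k)
      ≤ ∑ k, (a * f (RCLike.re ((Wᴴ * A * W) k k)) + b * f (RCLike.re ((Wᴴ * B * W) k k))) :=
        Finset.sum_le_sum fun k _ => by
          simpa only [hsplit, smul_eq_mul] using
            hf.2 (Set.mem_univ _) (Set.mem_univ _) ha hb hab
    _ ≤ a * ∑ i, f (hA.eigenvalues i) + b * ∑ i, f (hB.eigenvalues i) := by
        rw [Finset.sum_add_distrib, ← Finset.mul_sum, ← Finset.mul_sum]
        exact add_le_add (mul_le_mul_of_nonneg_left (hA.sum_map_re_conj_apply_le hf hW) ha)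
          (mul_le_mul_of_nonneg_left (hB.sum_map_re_conj_apply_le hf hW) hb)

lemma exists_mem_doublyStochastic_sum_mul_sq_eigenvalues_sub_eq (hA : A.IsHermitian)
    (hB : B.IsHermitian) :
    ∃ P ∈ doublyStochastic ℝ ι,
      ∑ i, ∑ j, P i j * (hA.eigenvalues i - hB.eigenvalues j) ^ 2 =
        ∑ i, ∑ j, ‖(A - B) i j‖ ^ 2 := by
  set U : Matrix ι ι 𝕜 := (hA.eigenvectorUnitary : Matrix ι ι 𝕜)
  set V : Matrix ι ι 𝕜 := (hB.eigenvectorUnitary : Matrix ι ι 𝕜)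
  have hU : U ∈ unitaryGroup ι 𝕜 := hA.eigenvectorUnitary.2
  have hV : V ∈ unitaryGroup ι 𝕜 := hB.eigenvectorUnitary.2
  have hUU : U * Uᴴ = 1 := Unitary.mul_star_self_of_mem hU
  have hVV : V * Vᴴ = 1 := Unitary.mul_star_self_of_mem hV
  have hentry : ∀ i j, (Uᴴ * (A - B) * V) i j =
      ((hA.eigenvalues i - hB.eigenvalues j : ℝ) : 𝕜) * (Uᴴ * V) i j := fun i j => by
    have hAV : Uᴴ * A * V = diagonal (fun i => (hA.eigenvalues i : 𝕜)) * (Uᴴ * V) := by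
      rw [← show Uᴴ * A * U = _ from hA.conj_eigenvectorUnitary]
      calc Uᴴ * A * V = Uᴴ * A * (U * Uᴴ) * V := by rw [hUU, mul_one]
        _ = _ := by simp only [mul_assoc]
    have hBV : Uᴴ * B * V = (Uᴴ * V) * diagonal (fun j => (hB.eigenvalues j : 𝕜)) := by
      rw [← show Vᴴ * B * V = _ from hB.conj_eigenvectorUnitary]
      calc Uᴴ * B * V = Uᴴ * (V * Vᴴ) * B * V := by rw [hVV, mul_one]
        _ = _ := by simp only [mul_assoc]
    rw [mul_sub, sub_mul, sub_apply, hAV, hBV, diagonal_mul, mul_diagonal, RCLike.ofReal_sub]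
    ring
  refine ⟨entrywiseNormSq (Uᴴ * V),
    entrywiseNormSq_mem_doublyStochastic (mul_mem (Unitary.star_mem hU) hV), ?_⟩
  rw [← sum_sum_norm_sq_unitary_mul_mul_unitary (show Uᴴ ∈ unitaryGroup ι 𝕜 from
    Unitary.star_mem hU) hV]
  simp only [hentry, norm_mul, RCLike.norm_ofReal, mul_pow, sq_abs, entrywiseNormSq, mul_comm]

end IsHermitian

lemma _root_.Finset.sum_mul_abs_le_sqrt_mul_sqrt {κ : Type*} (s : Finset κ) {w d : κ → ℝ}
    (hw : ∀ i ∈ s, 0 ≤ w i) :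
    ∑ i ∈ s, w i * |d i| ≤ √(∑ i ∈ s, w i) * √(∑ i ∈ s, w i * d i ^ 2) := by
  rw [← Real.sqrt_mul (Finset.sum_nonneg hw)]
  refine Real.le_sqrt_of_sq_le (Finset.sum_sq_le_sum_mul_sum_of_sq_le_mul s hw
    (fun i hi => mul_nonneg (hw i hi) (sq_nonneg _)) fun i _ => le_of_eq ?_)
  rw [mul_pow, sq_abs]
  ring

lemma _root_.LipschitzWith.abs_sum_sub_sum_le_of_mem_doublyStochastic {f : ℝ → ℝ} {L : NNReal}
    (hf : LipschitzWith L f) {P : Matrix ι ι ℝ} (hP : P ∈ doublyStochastic ℝ ι) (α β : ι → ℝ) :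
    |∑ i, f (α i) - ∑ j, f (β j)| ≤
      L * √(Fintype.card ι) * √(∑ i, ∑ j, P i j * (α i - β j) ^ 2) := by
  have hP0 : ∀ i j, 0 ≤ P i j := fun i j => nonneg_of_mem_doublyStochastic hP
  have hdiff : ∑ i, f (α i) - ∑ j, f (β j) = ∑ i, ∑ j, P i j * (f (α i) - f (β j)) := by
    simp only [mul_sub, Finset.sum_sub_distrib, ← Finset.sum_mul,
      sum_row_of_mem_doublyStochastic hP, one_mul]
    rw [Finset.sum_comm]
    simp only [← Finset.sum_mul, sum_col_of_mem_doublyStochastic hP, one_mul]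
  have hcs := Finset.sum_mul_abs_le_sqrt_mul_sqrt Finset.univ (w := fun x : ι × ι => P x.1 x.2)
    (d := fun x => α x.1 - β x.2) fun x _ => hP0 x.1 x.2
  simp only [Fintype.sum_prod_type, sum_row_of_mem_doublyStochastic hP, Finset.sum_const,
    Finset.card_univ, nsmul_eq_mul, mul_one] at hcs
  calc |∑ i, f (α i) - ∑ j, f (β j)|
      ≤ ∑ i, ∑ j, |P i j * (f (α i) - f (β j))| := by
        rw [hdiff]
        exact (Finset.abs_sum_le_sum_abs _ _).trans
          (Finset.sum_le_sum fun i _ => Finset.abs_sum_le_sum_abs _ _)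
    _ ≤ ∑ i, ∑ j, L * (P i j * |α i - β j|) := by
        refine Finset.sum_le_sum fun i _ => Finset.sum_le_sum fun j _ => ?_
        rw [abs_mul, abs_of_nonneg (hP0 i j), mul_left_comm]
        refine mul_le_mul_of_nonneg_left ?_ (hP0 i j)
        simpa only [Real.dist_eq] using hf.dist_le_mul (α i) (β j)
    _ ≤ L * √(Fintype.card ι) * √(∑ i, ∑ j, P i j * (α i - β j) ^ 2) := by
        simp only [← Finset.mul_sum, mul_assoc]
        exact mul_le_mul_of_nonneg_left hcs L.coe_nonneg

open Classical in
/-- `tr f(A)` for Hermitian `A`, and `0` otherwise. -/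
noncomputable def spectralSum (f : ℝ → ℝ) (A : Matrix ι ι 𝕜) : ℝ :=
  if hA : A.IsHermitian then ∑ i, f (hA.eigenvalues i) else 0

variable {f : ℝ → ℝ}

lemma IsHermitian.spectralSum_eq {A : Matrix ι ι 𝕜} (hA : A.IsHermitian) :
    spectralSum f A = ∑ i, f (hA.eigenvalues i) :=
  dif_pos hA

lemma convexOn_spectralSum (hf : ConvexOn ℝ Set.univ f) :
    ConvexOn ℝ {A : Matrix ι ι 𝕜 | A.IsHermitian} (spectralSum f) := by
  refine ⟨convex_setOf_isHermitian, fun A hA B hB a b ha hb hab => ?_⟩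
  have hC : (a • A + b • B).IsHermitian := convex_setOf_isHermitian hA hB ha hb hab
  rw [hC.spectralSum_eq, hA.spectralSum_eq, hB.spectralSum_eq]
  exact IsHermitian.sum_map_eigenvalues_smul_add_smul_le hA hB hf hC ha hb hab

lemma abs_spectralSum_sub_le {A B : Matrix ι ι 𝕜} (hA : A.IsHermitian) (hB : B.IsHermitian)
    {L : NNReal} (hf : LipschitzWith L f) :
    |spectralSum f A - spectralSum f B| ≤
      L * √(Fintype.card ι) * √(∑ i, ∑ j, ‖(A - B) i j‖ ^ 2) := by
  obtain ⟨P, hP, hPeq⟩ := hA.exists_mem_doublyStochastic_sum_mul_sq_eigenvalues_sub_eq hB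
  rw [hA.spectralSum_eq, hB.spectralSum_eq, ← hPeq]
  exact hf.abs_sum_sub_sum_le_of_mem_doublyStochastic hP _ _

end Matrix

/-- For `H₀` Hermitian and `f : ℝ → ℝ` convex and `L`-Lipschitz, the linear statistic
`H ↦ (1/n)∑ᵢ f(λᵢ(H + H₀))` is convex on the set of Hermitian matrices and
`(L/√n)`-Lipschitz with respect to the Hilbert–Schmidt norm. -/
theorem linear_statistic_convex_lipschitz
    (n : ℕ) (H₀ : Matrix (Fin n) (Fin n) ℂ) (hH₀ : H₀.IsHermitian)
    (f : ℝ → ℝ) (L : NNReal) (hconv : ConvexOn ℝ Set.univ f) (hlip : LipschitzWith L f)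
    (g : Matrix (Fin n) (Fin n) ℂ → ℝ)
    (hg : ∀ H, g H = @dite _ ((H + H₀).IsHermitian) (Classical.dec _)
      (fun h => (1 / (n : ℝ)) * ∑ i : Fin n, f (h.eigenvalues i)) (fun _ => 0)) :
    ConvexOn ℝ {H : Matrix (Fin n) (Fin n) ℂ | H.IsHermitian} g ∧
      ∀ H₁ H₂ : Matrix (Fin n) (Fin n) ℂ, H₁.IsHermitian → H₂.IsHermitian →
        |g H₁ - g H₂| ≤ ((L : ℝ) / Real.sqrt n) *
          Real.sqrt (∑ i : Fin n, ∑ j : Fin n, ‖H₁ i j - H₂ i j‖ ^ 2) := by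
  have hg' : g = fun H => (1 / (n : ℝ)) * spectralSum f (H + H₀) := funext fun H => by
    by_cases h : (H + H₀).IsHermitian
    · rw [hg, dif_pos h, h.spectralSum_eq]
    · rw [hg, dif_neg h, spectralSum, dif_neg h, mul_zero]
  have hshift : (fun H => H₀ + H) ⁻¹' {A : Matrix (Fin n) (Fin n) ℂ | A.IsHermitian} =
      {H | H.IsHermitian} :=
    Set.ext fun H => ⟨fun h => by simpa using h.sub hH₀, hH₀.add⟩
  subst hg'
  refine ⟨?_, fun H₁ H₂ h₁ h₂ => ?_⟩
  · simpa only [hshift, smul_eq_mul, Function.comp_apply] using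
      ((convexOn_spectralSum hconv).translate_left H₀).smul (by positivity : (0 : ℝ) ≤ 1 / n)
  · have hstat := abs_spectralSum_sub_le (h₁.add hH₀) (h₂.add hH₀) hlip
    rw [add_sub_add_right_eq_sub, Fintype.card_fin] at hstat
    calc |1 / (n : ℝ) * spectralSum f (H₁ + H₀) - 1 / n * spectralSum f (H₂ + H₀)|
        = 1 / n * |spectralSum f (H₁ + H₀) - spectralSum f (H₂ + H₀)| := by
          rw [← mul_sub, abs_mul, abs_of_nonneg (by positivity)]
      _ ≤ 1 / n * (L * √n * √(∑ i, ∑ j, ‖H₁ i j - H₂ i j‖ ^ 2)) :=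
          mul_le_mul_of_nonneg_left hstat (by positivity)
      _ = L / √n * √(∑ i, ∑ j, ‖H₁ i j - H₂ i j‖ ^ 2) := by
          rw [div_eq_mul_one_div (L : ℝ), ← Real.sqrt_div_self']
          ring
end
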